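/- arXiv:1505.03354 — 2 statements merged into one kernel-verified Lean document; each statement's English description precedes it below -/
import Mathlib

section
/- For Markovian SEIR dynamics with infection rate τ > 0, latency rate δ > 0 and recovery rate γ ≥ 0 on a finite simple graph G that is acyclic, for every pure initial configuration x⁰ : V → Fin 4, every triple of pairwise distinct nodes i, j, k with i adjacent to j and j adjacent to k, and every t ≥ 0, the pair-based (unclustered) moment closure is exact on the states ISS and ISI, i.e. P_{ijk}(I,S,S;t) · P_j(S;t) = P_{ij}(I,S;t) · P_{jk}(S,S;t) and P_{ijk}(I,S,I;t) · P_j(S;t) = P_{ij}(I,S;t) · P_{jk}(S,I;t). -/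
open Finset

/-- Rate of a single off-diagonal transition for the Markovian SEIR model with states
`0 = S`, `1 = E`, `2 = I`, `3 = R`: nonzero only if `y` agrees with `x` except at exactly one
node `i`, where either `S → E` (rate `τ · #infectious neighbours`), `E → I` (rate `δ`),
or `I → R` (rate `γ`). -/
noncomputable def seirRate {V : Type*} [Fintype V] [DecidableEq V] (G : SimpleGraph V)
    [DecidableRel G.Adj] (τ δ γ : ℝ) (x y : V → Fin 4) : ℝ :=
  ∑ i : V,
    ((if (∀ j, j ≠ i → x j = y j) ∧ x i = 0 ∧ y i = 1 then
        τ * ((Finset.univ.filter (fun j => G.Adj i j ∧ x j = 2)).card : ℝ) else 0)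
      + (if (∀ j, j ≠ i → x j = y j) ∧ x i = 1 ∧ y i = 2 then δ else 0)
      + (if (∀ j, j ≠ i → x j = y j) ∧ x i = 2 ∧ y i = 3 then γ else 0))

/-- Generator matrix of the Markovian SEIR dynamics on configurations `V → Fin 4`. -/
noncomputable def seirGen {V : Type*} [Fintype V] [DecidableEq V] (G : SimpleGraph V)
    [DecidableRel G.Adj] (τ δ γ : ℝ) : Matrix (V → Fin 4) (V → Fin 4) ℝ :=
  fun x y => if x = y then -∑ z ∈ Finset.univ.erase x, seirRate G τ δ γ x z
             else seirRate G τ δ γ x y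

/-- Distribution at time `t` started from the pure configuration `x0`. -/
noncomputable def seirP {V : Type*} [Fintype V] [DecidableEq V] (G : SimpleGraph V)
    [DecidableRel G.Adj] (τ δ γ : ℝ) (x0 : V → Fin 4) (t : ℝ) (x : V → Fin 4) : ℝ :=
  NormedSpace.exp (t • seirGen G τ δ γ) x0 x

/-- Single-node marginal `P_i(A;t)`. -/
noncomputable def seirP1 {V : Type*} [Fintype V] [DecidableEq V] (G : SimpleGraph V)
    [DecidableRel G.Adj] (τ δ γ : ℝ) (x0 : V → Fin 4) (i : V) (A : Fin 4) (t : ℝ) : ℝ :=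
  ∑ x ∈ Finset.univ.filter (fun x : V → Fin 4 => x i = A), seirP G τ δ γ x0 t x

/-- Pair marginal `P_{ij}(A,B;t)`. -/
noncomputable def seirP2 {V : Type*} [Fintype V] [DecidableEq V] (G : SimpleGraph V)
    [DecidableRel G.Adj] (τ δ γ : ℝ) (x0 : V → Fin 4) (i j : V) (A B : Fin 4) (t : ℝ) : ℝ :=
  ∑ x ∈ Finset.univ.filter (fun x : V → Fin 4 => x i = A ∧ x j = B), seirP G τ δ γ x0 t x

/-- Triple marginal `P_{ijk}(A,B,C;t)`. -/
noncomputable def seirP3 {V : Type*} [Fintype V] [DecidableEq V] (G : SimpleGraph V)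
    [DecidableRel G.Adj] (τ δ γ : ℝ) (x0 : V → Fin 4) (i j k : V) (A B C : Fin 4) (t : ℝ) : ℝ :=
  ∑ x ∈ Finset.univ.filter (fun x : V → Fin 4 => x i = A ∧ x j = B ∧ x k = C),
    seirP G τ δ γ x0 t x

/-!
While `j` is susceptible it blocks every interaction across it. On a tree, the set `s` of
vertices reachable from `i` without passing through `j` and the rest `r = sᶜ \ {j}` (which
contains `k`) are joined only through `j`, and once `j` has left `S` it never returns.
Restricted to `{x | x j = S}`, the generator is therefore the Kronecker sum `K_s ⊗ 1 + 1 ⊗ K_r`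
of the dynamics on the two sides, each killed at the rate at which that side infects `j`, and
its exponential is `exp (t K_s) ⊗ exp (t K_r)`. So on `{x | x j = S}` the law at time `t` is a
product of a function of `x|s` and a function of `x|r`, and both closure identities are the
factorisation of sums over a product.
-/

open NormedSpace
open scoped Kronecker Nat

namespace Matrix

variable {m n : Type*} [Fintype m] [DecidableEq m] [Fintype n] [DecidableEq n]

theorem summable_expSeries (A : Matrix m m ℝ) : Summable fun k : ℕ => (k !⁻¹ : ℚ) • A ^ k := by
  open scoped Matrix.Norms.Operator in exact expSeries_summable' A

theorem map_exp_eq_tsum {E : Type*} [AddCommMonoid E] [TopologicalSpace E] [T2Space E]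
    (Φ : Matrix m m ℝ →+ E) (hΦ : Continuous Φ) (A : Matrix m m ℝ) :
    Φ (exp A) = ∑' k : ℕ, Φ ((k !⁻¹ : ℚ) • A ^ k) := by
  rw [exp_eq_tsum_rat]
  exact ((summable_expSeries A).hasSum.map Φ hΦ).tsum_eq.symm

theorem map_exp_of_map_pow (Φ : Matrix m m ℝ →+ Matrix n n ℝ) (hΦ : Continuous Φ)
    {A : Matrix m m ℝ} (hA : ∀ k : ℕ, Φ (A ^ k) = Φ A ^ k) : Φ (exp A) = exp (Φ A) := by
  rw [map_exp_eq_tsum Φ hΦ, exp_eq_tsum_rat]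
  simp only [map_rat_smul, hA]

theorem exp_kronecker_one (A : Matrix m m ℝ) :
    exp (A ⊗ₖ (1 : Matrix n n ℝ)) = exp A ⊗ₖ (1 : Matrix n n ℝ) := by
  let Φ : Matrix m m ℝ →+ Matrix (m × n) (m × n) ℝ :=
    AddMonoidHom.mk' (· ⊗ₖ 1) fun A B => add_kronecker A B 1
  have hΦ : Continuous Φ := continuous_pi fun p => continuous_pi fun q =>
    (continuous_id.matrix_elem p.1 q.1).mul continuous_const
  have hpow : ∀ k : ℕ, Φ (A ^ k) = Φ A ^ k := by
    intro k
    induction k with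
    | zero => exact one_kronecker_one
    | succ k ih =>
      rw [pow_succ, pow_succ, ← ih]
      change (A ^ k * A) ⊗ₖ (1 : Matrix n n ℝ) = ((A ^ k) ⊗ₖ 1) * (A ⊗ₖ 1)
      rw [← mul_kronecker_mul, mul_one]
  exact (map_exp_of_map_pow Φ hΦ hpow).symm

theorem exp_one_kronecker (B : Matrix n n ℝ) :
    exp ((1 : Matrix m m ℝ) ⊗ₖ B) = (1 : Matrix m m ℝ) ⊗ₖ exp B := by
  let Φ : Matrix n n ℝ →+ Matrix (m × n) (m × n) ℝ :=
    AddMonoidHom.mk' (1 ⊗ₖ ·) fun A B => kronecker_add 1 A B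
  have hΦ : Continuous Φ := continuous_pi fun p => continuous_pi fun q =>
    continuous_const.mul (continuous_id.matrix_elem p.2 q.2)
  have hpow : ∀ k : ℕ, Φ (B ^ k) = Φ B ^ k := by
    intro k
    induction k with
    | zero => exact one_kronecker_one
    | succ k ih =>
      rw [pow_succ, pow_succ, ← ih]
      change (1 : Matrix m m ℝ) ⊗ₖ (B ^ k * B) = (1 ⊗ₖ (B ^ k)) * (1 ⊗ₖ B)
      rw [← mul_kronecker_mul, mul_one]
  exact (map_exp_of_map_pow Φ hΦ hpow).symm

theorem exp_kroneckerSum (A : Matrix m m ℝ) (B : Matrix n n ℝ) :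
    exp (A ⊗ₖ (1 : Matrix n n ℝ) + (1 : Matrix m m ℝ) ⊗ₖ B) = exp A ⊗ₖ exp B := by
  have hcomm : Commute (A ⊗ₖ (1 : Matrix n n ℝ)) ((1 : Matrix m m ℝ) ⊗ₖ B) := by
    simp only [Commute, SemiconjBy, ← mul_kronecker_mul, mul_one, one_mul]
  rw [exp_add_of_commute _ _ hcomm, exp_kronecker_one, exp_one_kronecker, ← mul_kronecker_mul,
    mul_one, one_mul]

section Restriction

variable {ι κ : Type*} [Fintype ι] [Fintype κ] {f : κ → ι}

def NotEnteringRange (A : Matrix ι ι ℝ) (f : κ → ι) : Prop :=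
  ∀ x b, x ∉ Set.range f → A x (f b) = 0

theorem NotEnteringRange.mul {A B : Matrix ι ι ℝ} (hA : A.NotEnteringRange f)
    (hB : B.NotEnteringRange f) : (A * B).NotEnteringRange f := by
  intro x b hx
  rw [mul_apply]
  refine Finset.sum_eq_zero fun z _ => ?_
  by_cases hz : z ∈ Set.range f
  · obtain ⟨c, rfl⟩ := hz
    rw [hA x c hx, zero_mul]
  · rw [hB z b hz, mul_zero]

theorem NotEnteringRange.pow [DecidableEq ι] {A : Matrix ι ι ℝ} (hA : A.NotEnteringRange f)
    (k : ℕ) : (A ^ k).NotEnteringRange f := by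
  induction k with
  | zero => exact fun x b hx => one_apply_ne fun h => hx ⟨b, h.symm⟩
  | succ k ih => rw [pow_succ]; exact ih.mul hA

theorem NotEnteringRange.submatrix_mul (hf : Function.Injective f) (A : Matrix ι ι ℝ)
    {B : Matrix ι ι ℝ} (hB : B.NotEnteringRange f) :
    (A * B).submatrix f f = A.submatrix f f * B.submatrix f f := by
  ext a b
  simp only [submatrix_apply, mul_apply]
  exact (Fintype.sum_of_injective f hf _ _ (fun z hz => by rw [hB z b hz, mul_zero])
    fun _ => rfl).symm

theorem NotEnteringRange.exp [DecidableEq ι] {A : Matrix ι ι ℝ} (hA : A.NotEnteringRange f) :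
    (NormedSpace.exp A).NotEnteringRange f := by
  intro x b hx
  let Φ : Matrix ι ι ℝ →+ ℝ := ⟨⟨fun B => B x (f b), rfl⟩, fun _ _ => rfl⟩
  have hΦ : Continuous Φ := continuous_id.matrix_elem x (f b)
  change Φ (NormedSpace.exp A) = 0
  rw [map_exp_eq_tsum Φ hΦ]
  refine (tsum_congr fun k => ?_).trans tsum_zero
  rw [map_rat_smul]
  change _ • (A ^ k) x (f b) = 0
  rw [hA.pow k x b hx, smul_zero]

theorem NotEnteringRange.submatrix_exp [DecidableEq ι] [DecidableEq κ]
    (hf : Function.Injective f) {A : Matrix ι ι ℝ} (hA : A.NotEnteringRange f) :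
    (NormedSpace.exp A).submatrix f f = NormedSpace.exp (A.submatrix f f) := by
  let Φ : Matrix ι ι ℝ →+ Matrix κ κ ℝ := ⟨⟨(·.submatrix f f), rfl⟩, fun _ _ => rfl⟩
  have hΦ : Continuous Φ := continuous_id.matrix_submatrix f f
  refine map_exp_of_map_pow Φ hΦ fun k => ?_
  induction k with
  | zero =>
    rw [pow_zero, pow_zero]
    exact submatrix_one f hf
  | succ k ih =>
    change (A ^ (k + 1)).submatrix f f = _
    rw [pow_succ, hA.submatrix_mul hf, pow_succ]
    exact congrArg (· * _) ih

end Restriction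

end Matrix

namespace SimpleGraph

variable {V : Type*} {G : SimpleGraph V} {i j k : V}

def IsSeparatedBy (G : SimpleGraph V) (P : Set V) (j : V) : Prop :=
  ∀ ⦃a b⦄, G.Adj a b → a ∈ P → b ∈ P ∨ b = j

theorem IsSeparatedBy.compl_diff {s : Set V} (h : G.IsSeparatedBy s j) :
    G.IsSeparatedBy (sᶜ \ {j}) j := by
  intro a b hab ha
  by_cases hbj : b = j
  · exact Or.inr hbj
  · refine Or.inl ⟨fun hb => ?_, hbj⟩
    rcases h hab.symm hb with h' | h'
    · exact ha.1 h'
    · exact ha.2 h'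

theorem not_reachable_deleteIncidenceSet_self (hij : i ≠ j) :
    ¬ (G.deleteIncidenceSet j).Reachable i j := by
  rintro ⟨w⟩
  rcases w.reverse with _ | ⟨h, _⟩
  · exact hij rfl
  · exact (deleteIncidenceSet_adj.1 h).2.1 rfl

theorem isSeparatedBy_reachable_deleteIncidenceSet (hij : i ≠ j) :
    G.IsSeparatedBy {v | (G.deleteIncidenceSet j).Reachable i v} j := by
  intro a b hab ha
  by_cases hbj : b = j
  · exact Or.inr hbj
  · have haj : a ≠ j := by
      rintro rfl
      exact not_reachable_deleteIncidenceSet_self hij ha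
    exact Or.inl (ha.trans (deleteIncidenceSet_adj.2 ⟨hab, haj, hbj⟩).reachable)


theorem IsAcyclic.not_reachable_deleteIncidenceSet (hG : G.IsAcyclic) (hij : G.Adj i j)
    (hjk : G.Adj j k) (hik : i ≠ k) : ¬ (G.deleteIncidenceSet j).Reachable i k := by
  intro h
  refine isBridge_iff.1 (isAcyclic_iff_forall_adj_isBridge.1 hG hij) ?_
  have hle : G.deleteIncidenceSet j ≤ G.deleteEdges {s(i, j)} := fun a b hab => by
    rw [deleteIncidenceSet_adj] at hab
    rw [deleteEdges_adj]
    simp [hab.1, hab.2.1, hab.2.2]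
  refine (h.mono hle).trans (Adj.reachable ?_)
  rw [deleteEdges_adj]
  simp [hjk.symm, Ne.symm hik, hij.ne.symm]

end SimpleGraph

section Rates

variable {V : Type*} [Fintype V] [DecidableEq V] (G : SimpleGraph V) [DecidableRel G.Adj]
  (τ δ γ : ℝ)

noncomputable def seirNodeRate (x y : V → Fin 4) (i : V) : ℝ :=
  (if (∀ j, j ≠ i → x j = y j) ∧ x i = 0 ∧ y i = 1 then
      τ * ((Finset.univ.filter (fun j => G.Adj i j ∧ x j = 2)).card : ℝ) else 0)
    + (if (∀ j, j ≠ i → x j = y j) ∧ x i = 1 ∧ y i = 2 then δ else 0)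
    + (if (∀ j, j ≠ i → x j = y j) ∧ x i = 2 ∧ y i = 3 then γ else 0)

noncomputable def seirExitRate (x : V → Fin 4) (i : V) : ℝ :=
  (if x i = 0 then τ * ((Finset.univ.filter (fun j => G.Adj i j ∧ x j = 2)).card : ℝ) else 0)
    + (if x i = 1 then δ else 0) + (if x i = 2 then γ else 0)

variable {G τ δ γ}

theorem seirRate_eq_sum (x y : V → Fin 4) :
    seirRate G τ δ γ x y = ∑ i, seirNodeRate G τ δ γ x y i := rfl

theorem sum_ite_changes_only_at (x : V → Fin 4) (m : V) (c : ℝ) (v e : Fin 4) :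
    (∑ y : V → Fin 4, if (∀ n, n ≠ m → x n = y n) ∧ x m = v ∧ y m = e then c else 0)
      = if x m = v then c else 0 := by
  rw [Finset.sum_eq_single (Function.update x m e)]
  · refine if_congr ⟨fun h => h.2.1, fun h => ⟨fun n hn => ?_, h, ?_⟩⟩ rfl rfl
    · exact (Function.update_of_ne hn e x).symm
    · exact Function.update_self m e x
  · rintro y - hy
    refine if_neg fun ⟨hxy, _, hym⟩ => hy (funext fun n => ?_)
    by_cases hn : n = m
    · rw [hn, Function.update_self, hym]
    · rw [Function.update_of_ne hn, hxy n hn]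
  · exact fun h => absurd (Finset.mem_univ _) h

theorem sum_seirNodeRate (x : V → Fin 4) (m : V) :
    ∑ y, seirNodeRate G τ δ γ x y m = seirExitRate G τ δ γ x m := by
  simp only [seirNodeRate, Finset.sum_add_distrib, sum_ite_changes_only_at, seirExitRate]

theorem seirNodeRate_eq_zero_of_not_step {x y : V → Fin 4} {m : V}
    (h : ¬ ((∀ n, n ≠ m → x n = y n) ∧ x m ≠ 3 ∧ y m = x m + 1)) :
    seirNodeRate G τ δ γ x y m = 0 := by
  have hstep : ∀ a b : Fin 4, a ≠ 3 → b = a + 1 → ∀ c : ℝ,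
      (if (∀ n, n ≠ m → x n = y n) ∧ x m = a ∧ y m = b then c else 0) = 0 :=
    fun a b ha hab c => if_neg fun ⟨hxy, hxa, hyb⟩ => h ⟨hxy, hxa ▸ ha, by rw [hxa, hyb, hab]⟩
  rw [seirNodeRate, hstep 0 1 (by decide) rfl, hstep 1 2 (by decide) rfl,
    hstep 2 3 (by decide) rfl]
  ring

theorem seirNodeRate_self (x : V → Fin 4) (m : V) : seirNodeRate G τ δ γ x x m = 0 := by
  have hsucc : ∀ a : Fin 4, a ≠ a + 1 := by decide
  exact seirNodeRate_eq_zero_of_not_step fun ⟨_, _, h⟩ => hsucc _ h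

theorem seirGen_apply_self (x : V → Fin 4) :
    seirGen G τ δ γ x x = -∑ m, seirExitRate G τ δ γ x m := by
  have hxx : seirRate G τ δ γ x x = 0 := sum_eq_zero fun m _ => seirNodeRate_self x m
  rw [seirGen, if_pos rfl, sum_erase univ hxx]
  simp only [seirRate_eq_sum]
  rw [sum_comm]
  simp only [sum_seirNodeRate]

theorem seirGen_apply_of_ne {x y : V → Fin 4} (h : x ≠ y) :
    seirGen G τ δ γ x y = ∑ m, seirNodeRate G τ δ γ x y m :=
  if_neg h

theorem seirNodeRate_eq_zero_of_returns_to_susceptible {j : V} {x y : V → Fin 4}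
    (hx : x j ≠ 0) (hy : y j = 0) (m : V) : seirNodeRate G τ δ γ x y m = 0 := by
  refine seirNodeRate_eq_zero_of_not_step fun ⟨hxy, hx3, hym⟩ => ?_
  by_cases hm : j = m
  · have hsucc : ∀ a : Fin 4, a ≠ 3 → 0 ≠ a + 1 := by decide
    subst hm
    exact hsucc _ hx3 (hy ▸ hym)
  · exact hx ((hxy j hm).trans hy)

theorem seirNodeRate_eq_zero_of_susceptible {j : V} {x y : V → Fin 4} (hx : x j = 0)
    (hy : y j = 0) : seirNodeRate G τ δ γ x y j = 0 :=
  seirNodeRate_eq_zero_of_not_step fun ⟨_, _, h⟩ => by rw [hx, hy] at h; exact absurd h (by decide)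

theorem seirGen_apply_eq_zero_of_returns_to_susceptible {j : V} {x y : V → Fin 4} (hx : x j ≠ 0)
    (hy : y j = 0) : seirGen G τ δ γ x y = 0 := by
  rw [seirGen_apply_of_ne (fun h : x = y => hx (by rw [h, hy]))]
  exact sum_eq_zero fun m _ => seirNodeRate_eq_zero_of_returns_to_susceptible hx hy m

end Rates

section Induce

variable {V : Type*} [Fintype V] {G : SimpleGraph V} [DecidableRel G.Adj]
  {τ δ γ : ℝ} {j : V} {P : Set V} [Fintype P]

theorem card_filter_induce_adj (hP : G.IsSeparatedBy P j) {x : V → Fin 4} (hxj : x j = 0)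
    (u : P) :
    #{w : P | (G.induce P).Adj u w ∧ P.domRestrict x w = 2} = #{w | G.Adj u w ∧ x w = 2} := by
  rw [← Fintype.card_subtype, ← Fintype.card_subtype]
  refine Fintype.card_congr (Equiv.subtypeSubtypeEquivSubtype (p := (· ∈ P))
    (q := fun w => G.Adj u w ∧ x w = 2) fun {w} hw => ?_)
  refine (hP hw.1 u.2).resolve_right fun hwj => ?_
  rw [hwj, hxj] at hw
  exact absurd hw.2 (by decide)

theorem seirExitRate_induce [DecidableEq V] (hP : G.IsSeparatedBy P j) {x : V → Fin 4}
    (hxj : x j = 0) (u : P) :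
    seirExitRate (G.induce P) τ δ γ (P.domRestrict x) u = seirExitRate G τ δ γ x u := by
  rw [seirExitRate, card_filter_induce_adj hP hxj u]
  rfl

theorem seirNodeRate_induce [DecidableEq V] (hP : G.IsSeparatedBy P j) {x y : V → Fin 4}
    (hxj : x j = 0) (hxy : ∀ w ∉ P, x w = y w) (u : P) :
    seirNodeRate (G.induce P) τ δ γ (P.domRestrict x) (P.domRestrict y) u
      = seirNodeRate G τ δ γ x y u := by
  have hagree : (∀ w : P, w ≠ u → x w = y w) ↔ ∀ n : V, n ≠ u → x n = y n := by
    refine ⟨fun h n hn => ?_, fun h w hw => h w fun he => hw (Subtype.ext he)⟩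
    by_cases hnP : n ∈ P
    · exact h ⟨n, hnP⟩ fun he => hn (congrArg Subtype.val he)
    · exact hxy n hnP
  rw [seirNodeRate, card_filter_induce_adj hP hxj u]
  simp only [Set.domRestrict_apply, hagree]
  rfl

theorem sum_seirNodeRate_subtype [DecidableEq V] [DecidablePred (· ∈ P)]
    (hP : G.IsSeparatedBy P j) {x : V → Fin 4} (hxj : x j = 0) (y : V → Fin 4) :
    ∑ u : P, seirNodeRate G τ δ γ x y u
      = if ∀ w ∉ P, x w = y w then
          seirRate (G.induce P) τ δ γ (P.domRestrict x) (P.domRestrict y)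
        else 0 := by
  split_ifs with hxy
  · simp only [seirRate_eq_sum, seirNodeRate_induce hP hxj hxy]
  · push Not at hxy
    obtain ⟨w, hw, hne⟩ := hxy
    refine sum_eq_zero fun u _ => ?_
    have h : ¬ ∀ n : V, n ≠ u → x n = y n := fun h => hne (h w fun hwu => hw (hwu ▸ u.2))
    simp [seirNodeRate, h]

end Induce

section Glue

variable {V : Type*} [DecidableEq V] {j : V} {s : Set V} [DecidablePred (· ∈ s)]

variable (j s) in
def glue (p : (s → Fin 4) × ((sᶜ \ {j} : Set V) → Fin 4)) : V → Fin 4 := fun v =>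
  if h : v ∈ s then p.1 ⟨v, h⟩ else if h' : v = j then 0 else p.2 ⟨v, h, h'⟩

theorem glue_apply_self (hsj : j ∉ s) (p) : glue j s p j = 0 := by
  rw [glue, dif_neg hsj, dif_pos rfl]

theorem glue_apply_fst (p) (u : s) : glue j s p u = p.1 u :=
  dif_pos u.2

theorem glue_apply_snd (p) (u : (sᶜ \ {j} : Set V)) : glue j s p u = p.2 u := by
  have hu : (u : V) ∉ s ∧ (u : V) ≠ j := u.2
  rw [glue, dif_neg hu.1, dif_neg hu.2]

theorem domRestrict_glue_fst (p) : s.domRestrict (glue j s p) = p.1 :=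
  funext (glue_apply_fst p)

theorem domRestrict_glue_snd (p) : (sᶜ \ {j}).domRestrict (glue j s p) = p.2 :=
  funext (glue_apply_snd p)

theorem glue_domRestrict {x : V → Fin 4} (hx : x j = 0) :
    glue j s (s.domRestrict x, (sᶜ \ {j}).domRestrict x) = x := by
  funext v
  by_cases hv : v ∈ s
  · exact dif_pos hv
  · by_cases hvj : v = j
    · rw [glue, dif_neg hv, dif_pos hvj, hvj, hx]
    · rw [glue, dif_neg hv, dif_neg hvj]
      rfl

theorem glue_injective : Function.Injective (glue j s) := fun p q h =>
  Prod.ext (by rw [← domRestrict_glue_fst p, h, domRestrict_glue_fst])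
    (by rw [← domRestrict_glue_snd p, h, domRestrict_glue_snd])

theorem mem_range_glue (hsj : j ∉ s) {x : V → Fin 4} : x ∈ Set.range (glue j s) ↔ x j = 0 :=
  ⟨fun ⟨p, hp⟩ => hp ▸ glue_apply_self hsj p, fun hx => ⟨_, glue_domRestrict hx⟩⟩

theorem glue_eqOn_compl_iff (hsj : j ∉ s) (p q) :
    (∀ w ∉ s, glue j s p w = glue j s q w) ↔ p.2 = q.2 := by
  refine ⟨fun h => ?_, fun h w hw => ?_⟩
  · rw [← domRestrict_glue_snd p, ← domRestrict_glue_snd q]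
    exact funext fun u => h u u.2.1
  · by_cases hwj : w = j
    · rw [hwj, glue_apply_self hsj, glue_apply_self hsj]
    · rw [glue, glue, dif_neg hw, dif_neg hw, dif_neg hwj, dif_neg hwj, h]

theorem glue_eqOn_compl_compl_diff_iff (hsj : j ∉ s) (p q) :
    (∀ w ∉ sᶜ \ {j}, glue j s p w = glue j s q w) ↔ p.1 = q.1 := by
  refine ⟨fun h => ?_, fun h w hw => ?_⟩
  · rw [← domRestrict_glue_fst p, ← domRestrict_glue_fst q]
    exact funext fun u => h u fun hu => hu.1 u.2
  · by_cases hws : w ∈ s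
    · rw [glue, glue, dif_pos hws, dif_pos hws, h]
    · have hwj : w = j := by_contra fun hwj => hw ⟨hws, hwj⟩
      rw [hwj, glue_apply_self hsj, glue_apply_self hsj]

theorem sum_eq_add_sum_subtype_add_sum_compl_diff {M : Type*} [AddCommMonoid M]
    [Fintype V] (hsj : j ∉ s) (F : V → M) :
    ∑ v, F v = F j + ∑ u : s, F u + ∑ u : (sᶜ \ {j} : Set V), F u := by
  rw [← Finset.sum_filter_add_sum_filter_not univ (· ∈ s) F,
    ← Finset.add_sum_erase _ F (by simpa using hsj : j ∈ univ.filter (· ∉ s)),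
    Finset.sum_subtype (p := (· ∈ s)) _ (by simp) F,
    Finset.sum_subtype (p := (· ∈ sᶜ \ {j})) _ (by simp [and_comm]) F]
  abel

end Glue

section Killed

variable {V : Type*} [DecidableEq V] (G : SimpleGraph V) [DecidableRel G.Adj] (τ δ γ : ℝ)

/-- The dynamics of the side `P` while `j` is susceptible, killed when `P` infects `j`. -/
noncomputable def killedSeirGen (j : V) (P : Set V) [Fintype P] :
    Matrix (P → Fin 4) (P → Fin 4) ℝ :=
  seirGen (G.induce P) τ δ γ - Matrix.diagonal fun a => τ * #{u : P | G.Adj j u ∧ a u = 2}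

variable {G τ δ γ} {j : V}

theorem killedSeirGen_apply_of_ne {P : Set V} [Fintype P] {a b : P → Fin 4}
    (h : a ≠ b) : killedSeirGen G τ δ γ j P a b = seirRate (G.induce P) τ δ γ a b := by
  rw [killedSeirGen, Matrix.sub_apply, Matrix.diagonal_apply_ne _ h, sub_zero,
    seirGen_apply_of_ne h, seirRate_eq_sum]

variable [Fintype V]

variable {s : Set V} [DecidablePred (· ∈ s)]

theorem seirRate_glue (hsj : j ∉ s) (hs : G.IsSeparatedBy s j) (p q) :
    seirRate G τ δ γ (glue j s p) (glue j s q)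
      = (if p.2 = q.2 then seirRate (G.induce s) τ δ γ p.1 q.1 else 0)
        + (if p.1 = q.1 then seirRate (G.induce (sᶜ \ {j})) τ δ γ p.2 q.2 else 0) := by
  rw [seirRate_eq_sum, sum_eq_add_sum_subtype_add_sum_compl_diff hsj,
    seirNodeRate_eq_zero_of_susceptible (glue_apply_self hsj p) (glue_apply_self hsj q),
    zero_add, sum_seirNodeRate_subtype hs (glue_apply_self hsj p),
    sum_seirNodeRate_subtype hs.compl_diff (glue_apply_self hsj p),
    domRestrict_glue_fst, domRestrict_glue_fst, domRestrict_glue_snd, domRestrict_glue_snd,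
    if_congr (glue_eqOn_compl_iff hsj p q) rfl rfl,
    if_congr (glue_eqOn_compl_compl_diff_iff hsj p q) rfl rfl]

theorem card_adj_glue (hsj : j ∉ s) (p) :
    (#{w | G.Adj j w ∧ glue j s p w = 2} : ℝ)
      = #{u : s | G.Adj j u ∧ p.1 u = 2}
        + #{u : (sᶜ \ {j} : Set V) | G.Adj j u ∧ p.2 u = 2} := by
  simp only [Finset.card_filter, Nat.cast_sum]
  rw [sum_eq_add_sum_subtype_add_sum_compl_diff hsj, glue_apply_self hsj]
  simp only [glue_apply_fst, glue_apply_snd]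
  simp

theorem seirGen_glue_self (hsj : j ∉ s) (hs : G.IsSeparatedBy s j) (p) :
    seirGen G τ δ γ (glue j s p) (glue j s p)
      = killedSeirGen G τ δ γ j s p.1 p.1 + killedSeirGen G τ δ γ j (sᶜ \ {j}) p.2 p.2 := by
  have hj : seirExitRate G τ δ γ (glue j s p) j
      = τ * (#{u : s | G.Adj j u ∧ p.1 u = 2}
        + #{u : (sᶜ \ {j} : Set V) | G.Adj j u ∧ p.2 u = 2}) := by
    rw [seirExitRate, glue_apply_self hsj, ← card_adj_glue hsj]
    simp
  have hfst : ∀ u : s, seirExitRate G τ δ γ (glue j s p) u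
      = seirExitRate (G.induce s) τ δ γ p.1 u := fun u => by
    rw [← seirExitRate_induce hs (glue_apply_self hsj p), domRestrict_glue_fst]
  have hsnd : ∀ u : (sᶜ \ {j} : Set V), seirExitRate G τ δ γ (glue j s p) u
      = seirExitRate (G.induce (sᶜ \ {j})) τ δ γ p.2 u := fun u => by
    rw [← seirExitRate_induce hs.compl_diff (glue_apply_self hsj p), domRestrict_glue_snd]
  rw [seirGen_apply_self, sum_eq_add_sum_subtype_add_sum_compl_diff hsj, hj]
  simp only [hfst, hsnd, killedSeirGen, Matrix.sub_apply, Matrix.diagonal_apply_eq,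
    seirGen_apply_self]
  ring

theorem submatrix_seirGen_glue (hsj : j ∉ s) (hs : G.IsSeparatedBy s j) :
    (seirGen G τ δ γ).submatrix (glue j s) (glue j s)
      = killedSeirGen G τ δ γ j s ⊗ₖ 1 + 1 ⊗ₖ killedSeirGen G τ δ γ j (sᶜ \ {j}) := by
  ext p q
  rw [Matrix.submatrix_apply, Matrix.add_apply, Matrix.kroneckerMap_apply,
    Matrix.kroneckerMap_apply]
  by_cases hpq : p = q
  · subst hpq
    rw [seirGen_glue_self hsj hs, Matrix.one_apply_eq, Matrix.one_apply_eq, mul_one, one_mul]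
  rw [seirGen_apply_of_ne (glue_injective.ne hpq), ← seirRate_eq_sum, seirRate_glue hsj hs]
  by_cases h1 : p.1 = q.1 <;> by_cases h2 : p.2 = q.2
  · exact absurd (Prod.ext h1 h2) hpq
  · rw [if_neg h2, if_pos h1, Matrix.one_apply_ne h2, killedSeirGen_apply_of_ne h2, h1,
      Matrix.one_apply_eq]
    ring
  · rw [if_pos h2, if_neg h1, Matrix.one_apply_ne h1, killedSeirGen_apply_of_ne h1, h2,
      Matrix.one_apply_eq]
    ring
  · rw [if_neg h1, if_neg h2, Matrix.one_apply_ne h1, Matrix.one_apply_ne h2]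
    ring

end Killed

section Factorization

variable {V : Type*} [Fintype V] [DecidableEq V] {G : SimpleGraph V} [DecidableRel G.Adj]
  {τ δ γ : ℝ} {j : V} {s : Set V} [DecidablePred (· ∈ s)]

theorem notEnteringRange_smul_seirGen (hsj : j ∉ s) (t : ℝ) :
    (t • seirGen G τ δ γ).NotEnteringRange (glue j s) := fun x b hx => by
  rw [Matrix.smul_apply, seirGen_apply_eq_zero_of_returns_to_susceptible
    (mt (mem_range_glue hsj).2 hx) (glue_apply_self hsj b), smul_zero]

theorem exp_smul_seirGen_glue (hsj : j ∉ s) (hs : G.IsSeparatedBy s j) (t : ℝ) (p q) :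
    NormedSpace.exp (t • seirGen G τ δ γ) (glue j s p) (glue j s q)
      = NormedSpace.exp (t • killedSeirGen G τ δ γ j s) p.1 q.1
        * NormedSpace.exp (t • killedSeirGen G τ δ γ j (sᶜ \ {j})) p.2 q.2 := by
  have hQ : (t • seirGen G τ δ γ).NotEnteringRange (glue j s) :=
    notEnteringRange_smul_seirGen hsj t
  have h := hQ.submatrix_exp glue_injective
  have hsub : (t • seirGen G τ δ γ).submatrix (glue j s) (glue j s)
      = (t • killedSeirGen G τ δ γ j s) ⊗ₖ 1
        + 1 ⊗ₖ (t • killedSeirGen G τ δ γ j (sᶜ \ {j})) := by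
    rw [Matrix.smul_kronecker, Matrix.kronecker_smul, ← smul_add,
      ← submatrix_seirGen_glue hsj hs]
    rfl
  rw [hsub, Matrix.exp_kroneckerSum] at h
  exact congrFun (congrFun h p) q

theorem exists_seirP_glue_eq_mul (hsj : j ∉ s) (hs : G.IsSeparatedBy s j) (x0 : V → Fin 4)
    (t : ℝ) : ∃ (f : (s → Fin 4) → ℝ) (g : ((sᶜ \ {j} : Set V) → Fin 4) → ℝ),
      ∀ a b, seirP G τ δ γ x0 t (glue j s (a, b)) = f a * g b := by
  by_cases hx0 : x0 j = 0
  · refine ⟨NormedSpace.exp (t • killedSeirGen G τ δ γ j s) (s.domRestrict x0),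
      NormedSpace.exp (t • killedSeirGen G τ δ γ j (sᶜ \ {j})) ((sᶜ \ {j}).domRestrict x0),
      fun a b => ?_⟩
    rw [seirP]
    conv_lhs => rw [← glue_domRestrict (s := s) hx0]
    exact exp_smul_seirGen_glue hsj hs t _ _
  · refine ⟨0, 0, fun a b => ?_⟩
    rw [Pi.zero_apply, zero_mul]
    exact (notEnteringRange_smul_seirGen hsj t).exp x0 (a, b) (mt (mem_range_glue hsj).1 hx0)

theorem sum_filter_eq_mul_of_glue (hsj : j ∉ s) {F : (V → Fin 4) → ℝ} {f : (s → Fin 4) → ℝ}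
    {g : ((sᶜ \ {j} : Set V) → Fin 4) → ℝ} (hF : ∀ a b, F (glue j s (a, b)) = f a * g b)
    {i k : V} (hi : i ∈ s) (hk : k ∈ sᶜ \ {j}) (A C : Fin 4 → Prop) [DecidablePred A]
    [DecidablePred C] :
    ∑ x ∈ univ.filter (fun x : V → Fin 4 => A (x i) ∧ x j = 0 ∧ C (x k)), F x
      = (∑ a ∈ univ.filter (fun a : s → Fin 4 => A (a ⟨i, hi⟩)), f a)
        * ∑ b ∈ univ.filter (fun b : (sᶜ \ {j} : Set V) → Fin 4 => C (b ⟨k, hk⟩)), g b := by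
  rw [Finset.sum_mul_sum, ← Finset.sum_product']
  refine Finset.sum_nbij' (fun x => (s.domRestrict x, (sᶜ \ {j}).domRestrict x)) (glue j s)
    ?_ ?_ ?_ ?_ ?_
  · intro x hx
    simp only [mem_filter, mem_univ, true_and, mem_product] at hx ⊢
    exact ⟨hx.1, hx.2.2⟩
  · rintro ⟨a, b⟩ hab
    simp only [mem_filter, mem_univ, true_and, mem_product] at hab ⊢
    rw [glue_apply_fst _ ⟨i, hi⟩, glue_apply_snd _ ⟨k, hk⟩]
    exact ⟨hab.1, glue_apply_self hsj _, hab.2⟩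
  · intro x hx
    exact glue_domRestrict (mem_filter.1 hx).2.2.1
  · rintro ⟨a, b⟩ -
    rw [domRestrict_glue_fst, domRestrict_glue_snd]
  · intro x hx
    rw [← hF, glue_domRestrict (mem_filter.1 hx).2.2.1]

end Factorization

theorem seir_pair_closure_exact_on_trees_general
    {V : Type*} [Fintype V] [DecidableEq V] (G : SimpleGraph V) [DecidableRel G.Adj]
    (hG : G.IsAcyclic) (τ δ γ : ℝ)
    (x0 : V → Fin 4) (i j k : V)
    (hik : i ≠ k)
    (hadj₁ : G.Adj i j) (hadj₂ : G.Adj j k)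
    (t : ℝ) :
    seirP3 G τ δ γ x0 i j k 2 0 0 t * seirP1 G τ δ γ x0 j 0 t
      = seirP2 G τ δ γ x0 i j 2 0 t * seirP2 G τ δ γ x0 j k 0 0 t ∧
    seirP3 G τ δ γ x0 i j k 2 0 2 t * seirP1 G τ δ γ x0 j 0 t
      = seirP2 G τ δ γ x0 i j 2 0 t * seirP2 G τ δ γ x0 j k 0 2 t := by
  classical
  let s : Set V := {v | (G.deleteIncidenceSet j).Reachable i v}
  have hsj : j ∉ s := SimpleGraph.not_reachable_deleteIncidenceSet_self hadj₁.ne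
  have hi : i ∈ s := SimpleGraph.Reachable.refl i
  have hk : k ∈ sᶜ \ {j} := ⟨hG.not_reachable_deleteIncidenceSet hadj₁ hadj₂ hik, hadj₂.ne.symm⟩
  obtain ⟨f, g, hfg⟩ := exists_seirP_glue_eq_mul hsj
    (SimpleGraph.isSeparatedBy_reachable_deleteIncidenceSet hadj₁.ne) x0 t
  have hmarg := sum_filter_eq_mul_of_glue hsj hfg hi hk
  have hP3 : ∀ C, seirP3 G τ δ γ x0 i j k 2 0 C t
      = (∑ a ∈ univ.filter (fun a : s → Fin 4 => a ⟨i, hi⟩ = 2), f a)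
        * ∑ b ∈ univ.filter (fun b : (sᶜ \ {j} : Set V) → Fin 4 => b ⟨k, hk⟩ = C), g b :=
    fun C => hmarg (· = 2) (· = C)
  have hP2i : seirP2 G τ δ γ x0 i j 2 0 t
      = (∑ a ∈ univ.filter (fun a : s → Fin 4 => a ⟨i, hi⟩ = 2), f a) * ∑ b, g b := by
    simpa [seirP2] using hmarg (· = 2) fun _ => True
  have hP2k : ∀ C, seirP2 G τ δ γ x0 j k 0 C t
      = (∑ a, f a)
        * ∑ b ∈ univ.filter (fun b : (sᶜ \ {j} : Set V) → Fin 4 => b ⟨k, hk⟩ = C), g b :=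
    fun C => by simpa [seirP2] using hmarg (fun _ => True) (· = C)
  have hP1 : seirP1 G τ δ γ x0 j 0 t = (∑ a, f a) * ∑ b, g b := by
    simpa [seirP1] using hmarg (fun _ => True) fun _ => True
  constructor <;> rw [hP3, hP2i, hP2k, hP1] <;> ring

/-- On an acyclic graph, for Markovian SEIR dynamics with pure initial condition, the
pair-based (unclustered) moment closure is exact on the states `ISS` and `ISI`
(`S = 0`, `I = 2`). -/
theorem seir_pair_closure_exact_on_trees
    {V : Type*} [Fintype V] [DecidableEq V] (G : SimpleGraph V) [DecidableRel G.Adj]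
    (hG : G.IsAcyclic) (τ δ γ : ℝ) (hτ : 0 < τ) (hδ : 0 < δ) (hγ : 0 ≤ γ)
    (x0 : V → Fin 4) (i j k : V)
    (hij : i ≠ j) (hjk : j ≠ k) (hik : i ≠ k)
    (hadj₁ : G.Adj i j) (hadj₂ : G.Adj j k)
    (t : ℝ) (ht : 0 ≤ t) :
    seirP3 G τ δ γ x0 i j k 2 0 0 t * seirP1 G τ δ γ x0 j 0 t
      = seirP2 G τ δ γ x0 i j 2 0 t * seirP2 G τ δ γ x0 j k 0 0 t ∧
    seirP3 G τ δ γ x0 i j k 2 0 2 t * seirP1 G τ δ γ x0 j 0 t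
      = seirP2 G τ δ γ x0 i j 2 0 t * seirP2 G τ δ γ x0 j k 0 2 t :=
  seir_pair_closure_exact_on_trees_general G hG τ δ γ x0 i j k hik hadj₁ hadj₂ t
end

section
/- For Markovian SIR dynamics with infection rate τ = 1 and recovery rate γ = 1 on the closed triangle, started from the pure initial configuration (I, S, S), Kirkwood's closure fails to be exact: there exist t > 0 and A, B, C ∈ Fin 3 such that P_{123}(A,B,C;t) · P_1(A;t) · P_2(B;t) · P_3(C;t) ≠ P_{12}(A,B;t) · P_{23}(B,C;t) · P_{13}(A,C;t). -/
open Finset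

/-- Rate of a single off-diagonal transition for the Markovian SIR model with states
`0 = S`, `1 = I`, `2 = R`: nonzero only if `y` agrees with `x` except at exactly one node `i`,
where either `S → I` (rate `τ · #infectious neighbours`) or `I → R` (rate `γ`). -/
noncomputable def sirRate {V : Type*} [Fintype V] [DecidableEq V] (G : SimpleGraph V)
    [DecidableRel G.Adj] (τ γ : ℝ) (x y : V → Fin 3) : ℝ :=
  ∑ i : V,
    ((if (∀ j, j ≠ i → x j = y j) ∧ x i = 0 ∧ y i = 1 then
        τ * ((Finset.univ.filter (fun j => G.Adj i j ∧ x j = 1)).card : ℝ) else 0)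
      + (if (∀ j, j ≠ i → x j = y j) ∧ x i = 1 ∧ y i = 2 then γ else 0))

/-- Generator matrix of the Markovian SIR dynamics on configurations `V → Fin 3`. -/
noncomputable def sirGen {V : Type*} [Fintype V] [DecidableEq V] (G : SimpleGraph V)
    [DecidableRel G.Adj] (τ γ : ℝ) : Matrix (V → Fin 3) (V → Fin 3) ℝ :=
  fun x y => if x = y then -∑ z ∈ Finset.univ.erase x, sirRate G τ γ x z
             else sirRate G τ γ x y

/-- Distribution at time `t` started from the pure configuration `x0`. -/
noncomputable def sirP {V : Type*} [Fintype V] [DecidableEq V] (G : SimpleGraph V)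
    [DecidableRel G.Adj] (τ γ : ℝ) (x0 : V → Fin 3) (t : ℝ) (x : V → Fin 3) : ℝ :=
  NormedSpace.exp (t • sirGen G τ γ) x0 x

/-- Single-node marginal `P_i(A;t)`. -/
noncomputable def sirP1 {V : Type*} [Fintype V] [DecidableEq V] (G : SimpleGraph V)
    [DecidableRel G.Adj] (τ γ : ℝ) (x0 : V → Fin 3) (i : V) (A : Fin 3) (t : ℝ) : ℝ :=
  ∑ x ∈ Finset.univ.filter (fun x : V → Fin 3 => x i = A), sirP G τ γ x0 t x

/-- Pair marginal `P_{ij}(A,B;t)`. -/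
noncomputable def sirP2 {V : Type*} [Fintype V] [DecidableEq V] (G : SimpleGraph V)
    [DecidableRel G.Adj] (τ γ : ℝ) (x0 : V → Fin 3) (i j : V) (A B : Fin 3) (t : ℝ) : ℝ :=
  ∑ x ∈ Finset.univ.filter (fun x : V → Fin 3 => x i = A ∧ x j = B), sirP G τ γ x0 t x

/-- Triple marginal `P_{ijk}(A,B,C;t)`. -/
noncomputable def sirP3 {V : Type*} [Fintype V] [DecidableEq V] (G : SimpleGraph V)
    [DecidableRel G.Adj] (τ γ : ℝ) (x0 : V → Fin 3) (i j k : V) (A B C : Fin 3) (t : ℝ) : ℝ :=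
  ∑ x ∈ Finset.univ.filter (fun x : V → Fin 3 => x i = A ∧ x j = B ∧ x k = C),
    sirP G τ γ x0 t x


/-- The closed triangle: the complete graph on nodes `{0,1,2}` (representing `1,2,3`). -/
def triangle : SimpleGraph (Fin 3) := ⊤

instance : DecidableRel triangle.Adj :=
  fun i j => inferInstanceAs (Decidable (i ≠ j))

/-
If Kirkwood's closure were exact for all `t > 0`, the defect
`D = P₁₂₃ P₁ P₂ P₃ - P₁₂ P₂₃ P₁₃` would vanish on `(0, ∞)`, and since `D` is smooth, so would
its derivatives at `0`. But the `n`-th derivative at `0` of a marginal `∑_{x ∈ F} p_t x` is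
`∑_{x ∈ F} (Qⁿ)_{x⁰ x}`, an integer when the rates are integers, so by the Leibniz rule `D⁽ⁿ⁾(0)`
is an exactly computable integer; for `(A, B, C) = (I, S, S)` on the triangle, `D⁽⁴⁾(0) = -2`.
-/
open NormedSpace Filter Topology
open scoped ContDiff

namespace Matrix

variable {ι : Type*} [Fintype ι] [DecidableEq ι]

theorem hasDerivAt_mul_exp_smul_apply (A M : Matrix ι ι ℝ) (a b : ι) (t : ℝ) :
    HasDerivAt (fun t : ℝ => (A * exp (t • M)) a b) ((A * M * exp (t • M)) a b) t := by
  -- `Matrix` has no canonical norm; the ℓ∞ operator norm makes it a Banach algebra inducing the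
  -- product topology, which is all that `exp` depends on.
  let := Matrix.linftyOpNormedRing (n := ι) (α := ℝ)
  let := Matrix.linftyOpNormedAlgebra (R := ℝ) (n := ι) (α := ℝ)
  have hexp := (hasDerivAt_exp_smul_const' M t).const_mul A
  rw [← mul_assoc] at hexp
  exact (entryLinearMap ℝ ℝ a b).toContinuousLinearMap.hasFDerivAt.comp_hasDerivAt t hexp

theorem iteratedDeriv_exp_smul_apply (M : Matrix ι ι ℝ) (n : ℕ) (a b : ι) :
    iteratedDeriv n (fun t : ℝ => exp (t • M) a b) = fun t => (M ^ n * exp (t • M)) a b := by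
  induction n with
  | zero => simp
  | succ n ih =>
    rw [iteratedDeriv_succ, ih]
    funext t
    rw [(hasDerivAt_mul_exp_smul_apply _ M a b t).deriv, pow_succ]

theorem contDiff_exp_smul_apply {n : WithTop ℕ∞} (M : Matrix ι ι ℝ) (a b : ι) :
    ContDiff ℝ n (fun t : ℝ => exp (t • M) a b) := by
  let := Matrix.linftyOpNormedRing (n := ι) (α := ℝ)
  let := Matrix.linftyOpNormedAlgebra (R := ℝ) (n := ι) (α := ℝ)
  refine AnalyticOnNhd.contDiff fun t _ => ?_
  have hsmul : AnalyticAt ℝ (fun s : ℝ => s • M) t := analyticAt_id.smul analyticAt_const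
  have hexp : AnalyticAt ℝ (fun s : ℝ => exp (s • M)) t :=
    AnalyticAt.comp (g := exp) (exp_analytic (t • M)) hsmul
  exact (entryLinearMap ℝ ℝ a b).toContinuousLinearMap.analyticAt _ |>.comp hexp

end Matrix

def binomialConvolution {R : Type*} [Semiring R] (a b : ℕ → R) (n : ℕ) : R :=
  ∑ i ∈ range (n + 1), n.choose i * a i * b (n - i)

theorem iteratedDeriv_eq_zero_of_forall_pos {E : Type*} [NormedAddCommGroup E] [NormedSpace ℝ E]
    {f : ℝ → E} {n : ℕ} (hf : ContDiff ℝ n f) (h : ∀ t > 0, f t = 0) :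
    iteratedDeriv n f 0 = 0 := by
  have hpos : ∀ t > 0, iteratedDeriv n f t = 0 := fun t ht => by
    have hf0 : f =ᶠ[𝓝 t] fun _ => 0 := eventually_of_mem (Ioi_mem_nhds ht) h
    simp [hf0.iteratedDeriv_eq]
  have hlim : Tendsto (iteratedDeriv n f) (𝓝[>] 0) (𝓝 (iteratedDeriv n f 0)) :=
    (hf.continuous_iteratedDeriv' n).continuousAt.tendsto.mono_left nhdsWithin_le_nhds
  exact tendsto_nhds_unique hlim
    (tendsto_const_nhds.congr' (eventually_nhdsWithin_of_forall fun t ht => (hpos t ht).symm))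

section SIR

variable {V : Type*} [Fintype V] [DecidableEq V] (G : SimpleGraph V) [DecidableRel G.Adj]

def sirRateNat (τ γ : ℕ) (x y : V → Fin 3) : ℕ :=
  ∑ i : V,
    ((if (∀ j, j ≠ i → x j = y j) ∧ x i = 0 ∧ y i = 1 then
        τ * (Finset.univ.filter (fun j => G.Adj i j ∧ x j = 1)).card else 0)
      + (if (∀ j, j ≠ i → x j = y j) ∧ x i = 1 ∧ y i = 2 then γ else 0))

def sirGenInt (τ γ : ℕ) : Matrix (V → Fin 3) (V → Fin 3) ℤ :=
  fun x y => if x = y then -∑ z ∈ Finset.univ.erase x, (sirRateNat G τ γ x z : ℤ)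
             else sirRateNat G τ γ x y

theorem sirRate_natCast (τ γ : ℕ) (x y : V → Fin 3) :
    sirRate G τ γ x y = sirRateNat G τ γ x y := by
  simp only [sirRate, sirRateNat]
  push_cast
  rfl

theorem sirGen_natCast (τ γ : ℕ) : sirGen G τ γ = (sirGenInt G τ γ).map (↑) := by
  ext x y
  simp only [sirGen, sirGenInt, Matrix.map_apply, sirRate_natCast]
  split_ifs <;> push_cast <;> rfl

def sirMoment (τ γ : ℕ) (x0 : V → Fin 3) (F : Finset (V → Fin 3)) (n : ℕ) : ℤ :=
  ∑ x ∈ F, (sirGenInt G τ γ ^ n) x0 x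

@[fun_prop]
theorem contDiff_sirP {n : WithTop ℕ∞} (τ γ : ℝ) (x0 x : V → Fin 3) :
    ContDiff ℝ n fun t => sirP G τ γ x0 t x :=
  Matrix.contDiff_exp_smul_apply _ x0 x

theorem iteratedDeriv_sum_sirP_zero (τ γ : ℕ) (x0 : V → Fin 3) (F : Finset (V → Fin 3))
    (n : ℕ) :
    iteratedDeriv n (fun t => ∑ x ∈ F, sirP G τ γ x0 t x) 0 = sirMoment G τ γ x0 F n := by
  unfold sirP
  rw [iteratedDeriv_fun_sum fun x _ => (Matrix.contDiff_exp_smul_apply _ x0 x).contDiffAt]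
  have hpow : (sirGenInt G τ γ).map ((↑) : ℤ → ℝ) ^ n = (sirGenInt G τ γ ^ n).map (↑) :=
    (map_pow (Int.castRingHom ℝ).mapMatrix _ n).symm
  simp [Matrix.iteratedDeriv_exp_smul_apply, sirMoment, sirGen_natCast, hpow]

noncomputable def kirkwoodDefect (τ γ : ℝ) (x0 : V → Fin 3) (i j k : V) (A B C : Fin 3)
    (t : ℝ) : ℝ :=
  sirP3 G τ γ x0 i j k A B C t * sirP1 G τ γ x0 i A t * sirP1 G τ γ x0 j B t
      * sirP1 G τ γ x0 k C t
    - sirP2 G τ γ x0 i j A B t * sirP2 G τ γ x0 j k B C t * sirP2 G τ γ x0 i k A C t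

def kirkwoodDefectJet (τ γ : ℕ) (x0 : V → Fin 3) (i j k : V) (A B C : Fin 3) (n : ℕ) : ℤ :=
  let m (p : (V → Fin 3) → Prop) [DecidablePred p] := sirMoment G τ γ x0 (univ.filter p)
  binomialConvolution (binomialConvolution (binomialConvolution
      (m fun x => x i = A ∧ x j = B ∧ x k = C) (m fun x => x i = A)) (m fun x => x j = B))
      (m fun x => x k = C) n
    - binomialConvolution (binomialConvolution
      (m fun x => x i = A ∧ x j = B) (m fun x => x j = B ∧ x k = C))
      (m fun x => x i = A ∧ x k = C) n

theorem contDiff_kirkwoodDefect {n : WithTop ℕ∞} (τ γ : ℝ) (x0 : V → Fin 3) (i j k : V)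
    (A B C : Fin 3) : ContDiff ℝ n (kirkwoodDefect G τ γ x0 i j k A B C) := by
  unfold kirkwoodDefect sirP1 sirP2 sirP3
  fun_prop

theorem iteratedDeriv_kirkwoodDefect_zero (τ γ : ℕ) (x0 : V → Fin 3) (i j k : V)
    (A B C : Fin 3) (n : ℕ) :
    iteratedDeriv n (kirkwoodDefect G τ γ x0 i j k A B C) 0 =
      kirkwoodDefectJet G τ γ x0 i j k A B C n := by
  unfold kirkwoodDefect sirP1 sirP2 sirP3
  rw [iteratedDeriv_fun_sub (by fun_prop) (by fun_prop)]
  simp (disch := fun_prop) only [iteratedDeriv_fun_mul, iteratedDeriv_sum_sirP_zero]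
  simp [kirkwoodDefectJet, binomialConvolution]

end SIR

set_option maxRecDepth 100000 in
theorem kirkwoodDefectJet_triangle :
    kirkwoodDefectJet triangle 1 1 ![1, 0, 0] 0 1 2 1 0 0 4 = -2 := by
  decide

/-- For Markovian SIR dynamics with `τ = γ = 1` on the closed triangle started from `(I,S,S)`,
Kirkwood's closure fails to be exact at some time `t > 0` and some state `(A,B,C)`. -/
theorem sir_triangle_kirkwood_fails :
    ∃ (t : ℝ) (A B C : Fin 3), 0 < t ∧
      sirP3 triangle 1 1 ![1, 0, 0] 0 1 2 A B C t * sirP1 triangle 1 1 ![1, 0, 0] 0 A t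
          * sirP1 triangle 1 1 ![1, 0, 0] 1 B t * sirP1 triangle 1 1 ![1, 0, 0] 2 C t
        ≠ sirP2 triangle 1 1 ![1, 0, 0] 0 1 A B t * sirP2 triangle 1 1 ![1, 0, 0] 1 2 B C t
            * sirP2 triangle 1 1 ![1, 0, 0] 0 2 A C t := by
  by_contra! hKirkwood
  have hvanish : iteratedDeriv 4 (kirkwoodDefect triangle 1 1 ![1, 0, 0] 0 1 2 1 0 0) 0 = 0 :=
    iteratedDeriv_eq_zero_of_forall_pos (contDiff_kirkwoodDefect ..)
      fun t ht => sub_eq_zero.2 (hKirkwood t 1 0 0 ht)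
  have hjet := iteratedDeriv_kirkwoodDefect_zero triangle 1 1 ![1, 0, 0] 0 1 2 1 0 0 4
  rw [kirkwoodDefectJet_triangle, Nat.cast_one] at hjet
  rw [hjet] at hvanish
  norm_num at hvanish
end
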